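/- Let the increments be almost surely nonnegative, i.e., P{X ≥ 0} = 1, let β := P{X = 0} ∈ [0,1), and let a > 0. Then E[e^{a N(x)}] < ∞ for some x ≥ 0 if and only if E[e^{a N(x)}] < ∞ for every x ≥ 0, and this holds if and only if a < -log β (where -log β := ∞ when β = 0). -/

import Mathlib

open MeasureTheory ProbabilityTheory Filter Set
open scoped ENNReal Topology

noncomputable section

/-- Partial sums of the increment sequence: the zero-delayed random walk
`S_0 = 0`, `S_n = X_0 + ⋯ + X_{n-1}`. -/
def rwS {Ω : Type*} (X : ℕ → Ω → ℝ) (n : ℕ) (ω : Ω) : ℝ := ∑ i ∈ Finset.range n, X i ω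

/-- First passage time `τ(x) = inf {n ∈ ℕ₀ : S_n > x}` into `(x, ∞)`,
with value `⊤` if the walk never exceeds `x`. -/
def firstPassage {Ω : Type*} (X : ℕ → Ω → ℝ) (x : ℝ) (ω : Ω) : ℕ∞ :=
  ⨅ (n : ℕ) (_ : x < rwS X n ω), (n : ℕ∞)

/-- Number of visits `N(x) = #{n ∈ ℕ : S_n ≤ x}` of the walk (after time 0) to `(-∞, x]`. -/
def numVisits {Ω : Type*} (X : ℕ → Ω → ℝ) (x : ℝ) (ω : Ω) : ℕ∞ :=
  {n : ℕ | 1 ≤ n ∧ rwS X n ω ≤ x}.encard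

/-- Last exit time `ρ(x)` from `(-∞, x]`: it is `sup {n ∈ ℕ : S_n ≤ x}` if
`inf_{n ≥ 1} S_n ≤ x` (the infimum taken in the extended reals), and `0` otherwise. -/
def lastExit {Ω : Type*} (X : ℕ → Ω → ℝ) (x : ℝ) (ω : Ω) : ℕ∞ :=
  if (⨅ (n : ℕ) (_ : 1 ≤ n), (rwS X n ω : EReal)) ≤ (x : EReal) then
    ⨆ (n : ℕ) (_ : 1 ≤ n ∧ rwS X n ω ≤ x), (n : ℕ∞)
  else 0

/-- `e^{a n}` for `n : ℕ∞`, equal to `∞` when `n = ∞`. -/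
def eexp (a : ℝ) (n : ℕ∞) : ℝ≥0∞ :=
  if n = ⊤ then ⊤ else ENNReal.ofReal (Real.exp (a * n.toNat))

/-- Exponential moment `E[e^{a T}]` (with values in `[0,∞]`) of an `ℕ∞`-valued random time. -/
def expMoment {Ω : Type*} [MeasurableSpace Ω] (P : Measure Ω) (a : ℝ) (T : Ω → ℕ∞) : ℝ≥0∞ :=
  ∫⁻ ω, eexp a (T ω) ∂P

/-- Laplace transform `φ(t) = E e^{-tY}` with values in `[0,∞]`. -/
def laplace {Ω : Type*} [MeasurableSpace Ω] (P : Measure Ω) (Y : Ω → ℝ) (t : ℝ) : ℝ≥0∞ :=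
  ∫⁻ ω, ENNReal.ofReal (Real.exp (-t * Y ω)) ∂P

/-- `R := -log inf_{t ≥ 0} E e^{-tY}`. -/
def Rconst {Ω : Type*} [MeasurableSpace Ω] (P : Measure Ω) (Y : Ω → ℝ) : ℝ :=
  -Real.log (⨅ t ∈ Set.Ici (0:ℝ), laplace P Y t).toReal

/-- The law of `Y` under `P` is concentrated on the lattice `l·ℤ`. -/
def ConcOnLattice {Ω : Type*} [MeasurableSpace Ω] (P : Measure Ω) (Y : Ω → ℝ) (l : ℝ) : Prop :=
  P {ω | ∃ k : ℤ, Y ω = l * k} = 1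

/-- The law of `Y` under `P` is non-lattice: it is not concentrated on any lattice `l·ℤ`, `l > 0`. -/
def NonLattice {Ω : Type*} [MeasurableSpace Ω] (P : Measure Ω) (Y : Ω → ℝ) : Prop :=
  ¬ ∃ l > (0:ℝ), ConcOnLattice P Y l

/-- The law of `Y` under `P` is lattice with span `l`: it is concentrated on `l·ℤ` and `l` is
maximal with this property. -/
def LatticeSpan {Ω : Type*} [MeasurableSpace Ω] (P : Measure Ω) (Y : Ω → ℝ) (l : ℝ) : Prop :=
  0 < l ∧ ConcOnLattice P Y l ∧ ∀ l' > (0:ℝ), ConcOnLattice P Y l' → l' ≤ l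

/-- The mean `E_γ[S_τ] = E[S_τ e^{aτ} e^{-γ S_τ}]` of `S_τ` under the exponentially tilted
measure, computed in `[0,∞]` (here `τ = τ(0)`; on `{τ = ∞}` the integrand is read as `0`). -/
def tiltedMeanStau {Ω : Type*} [MeasurableSpace Ω] (P : Measure Ω) (X : ℕ → Ω → ℝ)
    (a γ : ℝ) : ℝ≥0∞ :=
  ∫⁻ ω, ENNReal.ofReal (rwS X (firstPassage X 0 ω).toNat ω *
    Real.exp (a * ((firstPassage X 0 ω).toNat : ℝ)) *
    Real.exp (-γ * rwS X (firstPassage X 0 ω).toNat ω)) ∂P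

/-!
For nonnegative increments the walk is nondecreasing, so `N(x) > n` exactly when `S_{n+1} ≤ x`,
and summation by parts gives `E e^{aN(x)} = 1 + (e^a - 1) ∑ₙ e^{an} P(S_{n+1} ≤ x)`.
Let `φ(t) = E e^{-tX}`. The Chernoff bound `P(S_n ≤ x) ≤ e^{tx} φ(t)^n` makes the series converge
as soon as `φ(t) e^a < 1`, and since `φ(t) → β` as `t → ∞` such a `t` exists when `β e^a < 1`.
Conversely `P(S_n ≤ x) ≥ P(S_n = 0) = β^n` for `x ≥ 0`, so the series diverges when `β e^a ≥ 1`.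
-/

theorem ENNReal.one_add_tsub_one_mul_geom_sum {q : ℝ≥0∞} (hq : 1 ≤ q) (k : ℕ) :
    1 + (q - 1) * ∑ n ∈ Finset.range k, q ^ n = q ^ k := by
  induction k with
  | zero => simp
  | succ k ih =>
    rw [Finset.sum_range_succ, mul_add, ← add_assoc, ih, ← one_add_mul,
      add_tsub_cancel_of_le hq, pow_succ']

theorem eexp_eq_one_add_tsum {a : ℝ} (ha : 0 < a) (N : ℕ∞) :
    eexp a N = 1 + (ENNReal.ofReal (Real.exp a) - 1) *
      ∑' n : ℕ, {n : ℕ | (n : ℕ∞) < N}.indicator (ENNReal.ofReal (Real.exp a) ^ ·) n := by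
  set q := ENNReal.ofReal (Real.exp a)
  have hq : 1 < q := ENNReal.one_lt_ofReal.2 (Real.one_lt_exp_iff.2 ha)
  induction N using ENat.recTopCoe with
  | top =>
    simp [eexp, ENNReal.tsum_geometric, tsub_eq_zero_of_le hq.le, (tsub_pos_of_lt hq).ne']
  | coe k =>
    have hk : eexp a k = q ^ k := by
      simp [eexp, q, ← ENNReal.ofReal_pow (Real.exp_nonneg a), ← Real.exp_nat_mul, mul_comm]
    rw [hk, tsum_eq_sum (s := Finset.range k) (fun n hn => by simp_all),
      ← ENNReal.one_add_tsub_one_mul_geom_sum hq.le k]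
    congr 2
    exact Finset.sum_congr rfl fun n hn => by simp_all

section

variable {Ω : Type*}

theorem monotone_rwS {X : ℕ → Ω → ℝ} {ω : Ω} (hX : ∀ i, 0 ≤ X i ω) :
    Monotone fun n => rwS X n ω := fun _ _ hkl =>
  Finset.sum_le_sum_of_subset_of_nonneg (Finset.range_subset_range.2 hkl) fun i _ _ => hX i

theorem natCast_lt_numVisits_iff {X : ℕ → Ω → ℝ} {ω : Ω} (hS : Monotone fun n => rwS X n ω)
    (x : ℝ) (n : ℕ) : (n : ℕ∞) < numVisits X x ω ↔ rwS X (n + 1) ω ≤ x := by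
  rw [numVisits]
  constructor
  · intro hn
    by_contra! hx
    have hsub : {k : ℕ | 1 ≤ k ∧ rwS X k ω ≤ x} ⊆ Finset.Ico 1 (n + 1) := fun k ⟨hk1, hk⟩ => by
      simp only [Finset.coe_Ico, Set.mem_Ico]
      exact ⟨hk1, lt_of_not_ge fun hnk => (hx.trans_le (hS hnk)).not_ge hk⟩
    have := (Set.encard_le_encard hsub).trans_lt' hn
    rw [Set.encard_coe_eq_coe_finsetCard, Nat.card_Ico] at this
    simp at this
  · intro hx
    have hsub : (Finset.Icc 1 (n + 1) : Set ℕ) ⊆ {k : ℕ | 1 ≤ k ∧ rwS X k ω ≤ x} := fun k hk => by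
      simp only [Finset.coe_Icc, Set.mem_Icc] at hk
      exact ⟨hk.1, (hS hk.2).trans hx⟩
    refine lt_of_lt_of_le ?_ (Set.encard_le_encard hsub)
    rw [Set.encard_coe_eq_coe_finsetCard, Nat.card_Icc]
    exact_mod_cast n.lt_succ_self

variable [MeasurableSpace Ω] {P : Measure Ω}

theorem expMoment_eq_one_add_tsum [IsProbabilityMeasure P] {a : ℝ} (ha : 0 < a) {T : Ω → ℕ∞}
    (hT : ∀ n : ℕ, NullMeasurableSet {ω | (n : ℕ∞) < T ω} P) :
    expMoment P a T = 1 + (ENNReal.ofReal (Real.exp a) - 1) *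
      ∑' n : ℕ, ENNReal.ofReal (Real.exp a) ^ n * P {ω | (n : ℕ∞) < T ω} := by
  have hind : ∀ (n : ℕ) (ω : Ω), {n : ℕ | (n : ℕ∞) < T ω}.indicator
      (ENNReal.ofReal (Real.exp a) ^ ·) n =
      {ω | (n : ℕ∞) < T ω}.indicator (fun _ => ENNReal.ofReal (Real.exp a) ^ n) ω := by
    simp [Set.indicator_apply]
  simp_rw [expMoment, eexp_eq_one_add_tsum ha]
  rw [lintegral_add_left measurable_const, lintegral_const, measure_univ, mul_one,
    lintegral_const_mul' _ _ (by finiteness)]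
  simp_rw [hind]
  rw [lintegral_tsum fun n => aemeasurable_const.indicator₀ (hT n)]
  simp_rw [lintegral_indicator_const₀ (hT _)]

theorem expMoment_lt_top_iff [IsProbabilityMeasure P] {a : ℝ} (ha : 0 < a) {T : Ω → ℕ∞}
    (hT : ∀ n : ℕ, NullMeasurableSet {ω | (n : ℕ∞) < T ω} P) :
    expMoment P a T < ⊤ ↔
      ∑' n : ℕ, ENNReal.ofReal (Real.exp a) ^ n * P {ω | (n : ℕ∞) < T ω} < ⊤ := by
  have hq : ENNReal.ofReal (Real.exp a) - 1 ≠ 0 :=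
    (tsub_pos_of_lt (ENNReal.one_lt_ofReal.2 (Real.one_lt_exp_iff.2 ha))).ne'
  rw [expMoment_eq_one_add_tsum ha hT]
  simp [lt_top_iff_ne_top, ENNReal.mul_eq_top, hq]

theorem laplace_eq_lintegral_map {Y : Ω → ℝ} (hY : Measurable Y) (t : ℝ) :
    laplace P Y t = ∫⁻ y, ENNReal.ofReal (Real.exp (-t * y)) ∂P.map Y :=
  (lintegral_map (f := fun y => ENNReal.ofReal (Real.exp (-t * y))) (by fun_prop) hY).symm

theorem measure_le_le_exp_mul_laplace {Y : Ω → ℝ} (hY : Measurable Y) {t : ℝ} (ht : 0 ≤ t)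
    (x : ℝ) : P {ω | Y ω ≤ x} ≤ ENNReal.ofReal (Real.exp (t * x)) * laplace P Y t := by
  rw [laplace, ← lintegral_const_mul _ (by fun_prop), ← lintegral_indicator_one
    (measurableSet_le hY measurable_const)]
  refine lintegral_mono fun ω => ?_
  by_cases hω : Y ω ≤ x
  · rw [Set.indicator_of_mem (show ω ∈ {ω | Y ω ≤ x} from hω), Pi.one_apply,
      ← ENNReal.ofReal_mul (Real.exp_nonneg _), ← Real.exp_add]
    exact ENNReal.one_le_ofReal.2 (Real.one_le_exp (by nlinarith))
  · simp [hω]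

theorem tendsto_laplace_atTop [IsFiniteMeasure P] {Y : Ω → ℝ} (hY : Measurable Y)
    (hY0 : ∀ᵐ ω ∂P, 0 ≤ Y ω) :
    Tendsto (laplace P Y) atTop (𝓝 (P {ω | Y ω = 0})) := by
  rw [← lintegral_indicator_one (s := {ω | Y ω = 0}) (hY (measurableSet_singleton 0))]
  refine tendsto_lintegral_filter_of_dominated_convergence (fun _ => 1)
    (Eventually.of_forall fun t => by fun_prop) ?_ (by simp) ?_
  · filter_upwards [eventually_ge_atTop 0] with t ht
    filter_upwards [hY0] with ω hω
    exact ENNReal.ofReal_le_one.2 (Real.exp_le_one_iff.2 (by nlinarith))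
  · filter_upwards [hY0] with ω hω
    rcases hω.eq_or_lt with h0 | hpos
    · simp [← h0, Set.indicator_of_mem]
    · have : Tendsto (fun t : ℝ => Real.exp (-t * Y ω)) atTop (𝓝 0) :=
        Real.tendsto_exp_atBot.comp (tendsto_neg_atTop_atBot.atBot_mul_const hpos)
      simpa [Set.indicator_of_notMem, hpos.ne'] using ENNReal.tendsto_ofReal this

theorem measurable_rwS {X : ℕ → Ω → ℝ} (hX : ∀ i, Measurable (X i)) (n : ℕ) :
    Measurable (rwS X n) :=
  Finset.measurable_sum _ fun i _ => hX i

theorem laplace_rwS {X : ℕ → Ω → ℝ} (hX : ∀ i, Measurable (X i)) (hindep : iIndepFun X P)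
    (hident : ∀ i, P.map (X i) = P.map (X 0)) (t : ℝ) (n : ℕ) :
    laplace P (rwS X n) t = laplace P (X 0) t ^ n := by
  have hexp : Measurable fun y : ℝ => ENNReal.ofReal (Real.exp (-t * y)) := by fun_prop
  calc laplace P (rwS X n) t
      = ∫⁻ ω, ∏ i ∈ Finset.range n, ENNReal.ofReal (Real.exp (-t * X i ω)) ∂P := by
        refine lintegral_congr fun ω => ?_
        rw [← ENNReal.ofReal_prod_of_nonneg fun _ _ => Real.exp_nonneg _, ← Real.exp_sum,
          rwS, Finset.mul_sum]
    _ = ∏ i ∈ Finset.range n, laplace P (X i) t :=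
        lintegral_prod_eq_prod_lintegral_of_indepFun _ _ (hindep.comp _ fun _ => hexp)
          fun i => hexp.comp (hX i)
    _ = laplace P (X 0) t ^ n := by
        simp [laplace_eq_lintegral_map (hX _), hident]

theorem measure_rwS_eq_zero_eq_pow [IsProbabilityMeasure P] {X : ℕ → Ω → ℝ}
    (hX : ∀ i, Measurable (X i)) (hindep : iIndepFun X P)
    (hident : ∀ i, P.map (X i) = P.map (X 0)) (hX0 : ∀ᵐ ω ∂P, ∀ i, 0 ≤ X i ω) (n : ℕ) :
    P {ω | rwS X n ω = 0} = P {ω | X 0 ω = 0} ^ n := by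
  have hS : Tendsto (laplace P (rwS X n)) atTop (𝓝 (P {ω | rwS X n ω = 0})) :=
    tendsto_laplace_atTop (measurable_rwS hX n)
      (hX0.mono fun ω hω => Finset.sum_nonneg fun i _ => hω i)
  have hpow := ((ENNReal.continuous_pow n).tendsto _).comp
    (tendsto_laplace_atTop (P := P) (hX 0) (hX0.mono fun ω hω => hω 0))
  rw [show laplace P (rwS X n) = fun t => laplace P (X 0) t ^ n from
    funext (laplace_rwS hX hindep hident · n)] at hS
  exact tendsto_nhds_unique hS hpow

variable [IsProbabilityMeasure P] {X : ℕ → Ω → ℝ}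

theorem ae_forall_nonneg_of_map_eq (hX : ∀ i, Measurable (X i))
    (hident : ∀ i, P.map (X i) = P.map (X 0)) (h0 : P {ω | 0 ≤ X 0 ω} = 1) :
    ∀ᵐ ω ∂P, ∀ i, 0 ≤ X i ω := by
  have hmap : ∀ᵐ y ∂P.map (X 0), 0 ≤ y :=
    (ae_map_iff (hX 0).aemeasurable measurableSet_Ici).2 <|
      (ae_iff_measure_eq (measurableSet_le measurable_const (hX 0)).nullMeasurableSet).2
        (h0.trans measure_univ.symm)
  refine ae_all_iff.2 fun i => ae_of_ae_map (hX i).aemeasurable ?_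
  rwa [hident i]

theorem tsum_pow_mul_measure_rwS_le_lt_top (hX : ∀ i, Measurable (X i)) (hindep : iIndepFun X P)
    (hident : ∀ i, P.map (X i) = P.map (X 0)) (hX0 : ∀ᵐ ω ∂P, ∀ i, 0 ≤ X i ω)
    {q : ℝ≥0∞} (hq : q ≠ ⊤) (hβq : P {ω | X 0 ω = 0} * q < 1) (x : ℝ) :
    ∑' n : ℕ, q ^ n * P {ω | rwS X (n + 1) ω ≤ x} < ⊤ := by
  have hlim := tendsto_laplace_atTop (hX 0) (hX0.mono fun ω hω => hω 0)
  obtain ⟨t, ht, hrq, hr⟩ : ∃ t : ℝ, 0 ≤ t ∧ laplace P (X 0) t * q < 1 ∧ laplace P (X 0) t < ⊤ :=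
    ((eventually_ge_atTop 0).and <| ((ENNReal.Tendsto.mul_const hlim (.inr hq)).eventually_lt_const
      hβq).and (hlim.eventually_lt_const (measure_lt_top _ _))).exists
  set r := laplace P (X 0) t
  calc ∑' n : ℕ, q ^ n * P {ω | rwS X (n + 1) ω ≤ x}
      ≤ ∑' n : ℕ, ENNReal.ofReal (Real.exp (t * x)) * r * (r * q) ^ n := by
        refine ENNReal.tsum_le_tsum fun n => ?_
        calc q ^ n * P {ω | rwS X (n + 1) ω ≤ x}
            ≤ q ^ n * (ENNReal.ofReal (Real.exp (t * x)) * r ^ (n + 1)) := by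
              rw [← laplace_rwS hX hindep hident]
              gcongr
              exact measure_le_le_exp_mul_laplace (measurable_rwS hX _) ht x
          _ = ENNReal.ofReal (Real.exp (t * x)) * r * (r * q) ^ n := by ring
    _ = ENNReal.ofReal (Real.exp (t * x)) * r * (1 - r * q)⁻¹ := by
        rw [ENNReal.tsum_mul_left, ENNReal.tsum_geometric]
    _ < ⊤ := by
        have : (1 - r * q)⁻¹ ≠ ⊤ := ENNReal.inv_ne_top.2 (tsub_pos_of_lt hrq).ne'
        finiteness

theorem tsum_pow_mul_measure_rwS_le_eq_top (hX : ∀ i, Measurable (X i)) (hindep : iIndepFun X P)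
    (hident : ∀ i, P.map (X i) = P.map (X 0)) (hX0 : ∀ᵐ ω ∂P, ∀ i, 0 ≤ X i ω)
    {q : ℝ≥0∞} (hβq : 1 ≤ P {ω | X 0 ω = 0} * q) {x : ℝ} (hx : 0 ≤ x) :
    ∑' n : ℕ, q ^ n * P {ω | rwS X (n + 1) ω ≤ x} = ⊤ := by
  set β := P {ω | X 0 ω = 0}
  have hβ : β ≠ 0 := by rintro h0; simp [h0] at hβq
  refine eq_top_iff.2 <| calc
    ⊤ = β * ∑' n : ℕ, (β * q) ^ n := by
        rw [ENNReal.tsum_geometric, tsub_eq_zero_of_le hβq, ENNReal.inv_zero, ENNReal.mul_top hβ]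
    _ = ∑' n : ℕ, q ^ n * β ^ (n + 1) := by
        rw [← ENNReal.tsum_mul_left]
        exact tsum_congr fun n => by ring
    _ ≤ ∑' n : ℕ, q ^ n * P {ω | rwS X (n + 1) ω ≤ x} := by
        refine ENNReal.tsum_le_tsum fun n => ?_
        rw [← measure_rwS_eq_zero_eq_pow hX hindep hident hX0]
        gcongr
        exact fun hω => hω.le.trans hx

theorem expMoment_numVisits_lt_top_iff (hX : ∀ i, Measurable (X i)) (hindep : iIndepFun X P)
    (hident : ∀ i, P.map (X i) = P.map (X 0)) (hX0 : ∀ᵐ ω ∂P, ∀ i, 0 ≤ X i ω)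
    {a : ℝ} (ha : 0 < a) {x : ℝ} (hx : 0 ≤ x) :
    expMoment P a (numVisits X x) < ⊤ ↔ P {ω | X 0 ω = 0} * ENNReal.ofReal (Real.exp a) < 1 := by
  have hvisits (n : ℕ) :
      {ω | (n : ℕ∞) < numVisits X x ω} =ᵐ[P] {ω | rwS X (n + 1) ω ≤ x} := by
    filter_upwards [hX0] with ω hω
    exact propext (natCast_lt_numVisits_iff (monotone_rwS hω) x n)
  have hmeas (n : ℕ) : MeasurableSet {ω | rwS X (n + 1) ω ≤ x} :=
    measurableSet_le (measurable_rwS hX _) measurable_const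
  rw [expMoment_lt_top_iff ha fun n => (hmeas n).nullMeasurableSet.congr (hvisits n).symm]
  simp_rw [measure_congr (hvisits _)]
  refine ⟨fun h => ?_, fun hβq =>
    tsum_pow_mul_measure_rwS_le_lt_top hX hindep hident hX0 ENNReal.ofReal_ne_top hβq x⟩
  by_contra! hβq
  exact h.ne (tsum_pow_mul_measure_rwS_le_eq_top hX hindep hident hX0 hβq hx)

end

theorem eq_zero_or_lt_neg_log_iff {β : ℝ} (hβ : 0 ≤ β) (a : ℝ) :
    (β = 0 ∨ a < -Real.log β) ↔ β * Real.exp a < 1 := by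
  rcases hβ.eq_or_lt with rfl | hpos
  · simp
  rw [← Real.log_neg_iff (by positivity), Real.log_mul hpos.ne' (Real.exp_pos a).ne',
    Real.log_exp, or_iff_right hpos.ne']
  constructor <;> intro <;> linarith

theorem exp_moment_numVisits_nonneg_increments_general
    {Ω : Type*} [MeasurableSpace Ω] (P : Measure Ω) [IsProbabilityMeasure P]
    (X : ℕ → Ω → ℝ) (hmeas : ∀ i, Measurable (X i))
    (hindep : iIndepFun X P)
    (hident : ∀ i, P.map (X i) = P.map (X 0))
    (hnonneg : P {ω | 0 ≤ X 0 ω} = 1)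
    (a : ℝ) (ha : 0 < a) :
    ((∃ x ≥ (0:ℝ), expMoment P a (numVisits X x) < ⊤) ↔
      ((P {ω | X 0 ω = 0}).toReal = 0 ∨ a < -Real.log (P {ω | X 0 ω = 0}).toReal)) ∧
    ((∀ x ≥ (0:ℝ), expMoment P a (numVisits X x) < ⊤) ↔
      ((P {ω | X 0 ω = 0}).toReal = 0 ∨ a < -Real.log (P {ω | X 0 ω = 0}).toReal)) := by
  have hX0 := ae_forall_nonneg_of_map_eq hmeas hident hnonneg
  have key : ∀ x ≥ (0:ℝ), expMoment P a (numVisits X x) < ⊤ ↔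
      ((P {ω | X 0 ω = 0}).toReal = 0 ∨ a < -Real.log (P {ω | X 0 ω = 0}).toReal) := by
    intro x hx
    rw [expMoment_numVisits_lt_top_iff hmeas hindep hident hX0 ha hx,
      eq_zero_or_lt_neg_log_iff ENNReal.toReal_nonneg, ← ENNReal.ofReal_lt_one,
      ENNReal.ofReal_mul ENNReal.toReal_nonneg, ENNReal.ofReal_toReal (measure_ne_top _ _)]
  exact ⟨⟨fun ⟨x, hx, h⟩ => (key x hx).1 h, fun h => ⟨0, le_rfl, (key 0 le_rfl).2 h⟩⟩,
    ⟨fun h => (key 0 le_rfl).1 (h 0 le_rfl), fun h x hx => (key x hx).2 h⟩⟩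

/-- For a random walk with a.s. nonnegative i.i.d. increments with
`β := P{X = 0} < 1` and `a > 0`, `E e^{aN(x)} < ∞` for some `x ≥ 0` iff for every `x ≥ 0`,
iff `a < -log β` (with `-log 0 := ∞`). -/
theorem exp_moment_numVisits_nonneg_increments
    {Ω : Type*} [MeasurableSpace Ω] (P : Measure Ω) [IsProbabilityMeasure P]
    (X : ℕ → Ω → ℝ) (hmeas : ∀ i, Measurable (X i))
    (hindep : iIndepFun X P)
    (hident : ∀ i, P.map (X i) = P.map (X 0))
    (hnonneg : P {ω | 0 ≤ X 0 ω} = 1)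
    (hβlt : P {ω | X 0 ω = 0} < 1)
    (a : ℝ) (ha : 0 < a) :
    ((∃ x ≥ (0:ℝ), expMoment P a (numVisits X x) < ⊤) ↔
      ((P {ω | X 0 ω = 0}).toReal = 0 ∨ a < -Real.log (P {ω | X 0 ω = 0}).toReal)) ∧
    ((∀ x ≥ (0:ℝ), expMoment P a (numVisits X x) < ⊤) ↔
      ((P {ω | X 0 ω = 0}).toReal = 0 ∨ a < -Real.log (P {ω | X 0 ω = 0}).toReal)) :=
  exp_moment_numVisits_nonneg_increments_general P X hmeas hindep hident hnonneg a ha
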